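/- Let μ₁, μ₂ be σ-finite measures on ℝ absolutely continuous with respect to Lebesgue measure with bounded Radon–Nikodym derivatives, let μ = μ₁×μ₂ be supported by a compact body K ⊂ ℝ², and suppose μ gives zero measure to all vertical and horizontal lines. Then the gradient of F_{K,μ} is Lipschitz continuous on ℝ²; in particular |D₁F_{K,μ}(q) − D₁F_{K,μ}(p)| = 2 μ({(α,β)∈K : min{p⁽¹⁾,q⁽¹⁾} < α < max{p⁽¹⁾,q⁽¹⁾}}) ≤ 2 C₁ (sup_s Y_{K,μ}(s)) |p⁽¹⁾ − q⁽¹⁾| for all p,q ∈ ℝ², where C₁ bounds the density of μ₁ and Y_{K,μ}(x) = μ₂({y : (x,y)∈K}). -/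

import Mathlib

/-!
The integrand splits, so `F z = g₁ z.1 + g₂ z.2` with `gᵢ t = ∫ |t - α| dνᵢ`, where `ν₁, ν₂` are
the coordinate marginals of `μ` restricted to `K`. For a finite atomless measure `ν` on `ℝ`, the
map `t ↦ ∫ |t - α| dν` has derivative `ν (-∞, x) - ν (x, ∞)` at `x`: replacing `|y - α| - |x - α|`
by `(y - x) sign (x - α)` only costs `2 |y - x|` on the interval between `x` and `y`, whose mass
tends to `ν {x} = 0`. Between `p ≤ q` this derivative grows by `2 ν (p, q)`, and by Fubini `ν₁`
is bounded by `C₁ · sup_s Y(s)` times Lebesgue measure, whence the Lipschitz bounds.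
-/

open MeasureTheory Set Filter Topology Asymptotics
open scoped ENNReal NNReal

theorem abs_sub_abs_sub_mul_sign_le (x y α : ℝ) :
    |(|y - α| - |x - α| - (y - x) * Real.sign (x - α))|
      ≤ (uIcc x y).indicator (fun _ => 2 * |y - x|) α := by
  by_cases hα : α ∈ uIcc x y
  · rw [indicator_of_mem hα]
    have hsign : |Real.sign (x - α)| ≤ 1 := by
      rcases Real.sign_apply_eq (x - α) with h | h | h <;> simp [h]
    calc _ ≤ |(|y - α| - |x - α|)| + |y - x| * |Real.sign (x - α)| := by
          rw [← abs_mul]; exact abs_sub _ _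
      _ ≤ |y - x| + |y - x| * 1 :=
          add_le_add (abs_abs_sub_abs_le_abs_sub _ _ |>.trans_eq (by ring_nf))
            (by gcongr)
      _ = 2 * |y - x| := by ring
  · rw [indicator_of_notMem hα]
    simp only [mem_uIcc, not_or, not_and_or, not_le] at hα
    obtain ⟨hx | hx, hy | hy⟩ := hα
    · rw [Real.sign_of_pos (by linarith), abs_of_pos (a := y - α) (by linarith),
        abs_of_pos (a := x - α) (by linarith)]
      simp
    · linarith
    · linarith
    · rw [Real.sign_of_neg (by linarith), abs_of_neg (a := y - α) (by linarith),
        abs_of_neg (a := x - α) (by linarith)]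
      simp

theorem sign_sub_eq_indicator_sub_indicator (x : ℝ) :
    (fun α => Real.sign (x - α)) = (Iio x).indicator 1 - (Ioi x).indicator 1 := by
  ext α
  rcases lt_trichotomy α x with h | rfl | h
  · simp [h, h.not_gt, Real.sign_of_pos (sub_pos.2 h)]
  · simp
  · simp [h, h.not_gt, Real.sign_of_neg (sub_neg.2 h)]

theorem NullSingletonClass.of_le_smul {X : Type*} [MeasurableSpace X] {μ ν : Measure X}
    [NullSingletonClass μ] {c : ℝ≥0∞} (h : ν ≤ c • μ) : NullSingletonClass ν :=
  ⟨fun x => le_zero_iff.1 ((Measure.le_iff'.1 h {x}).trans (by simp))⟩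

section AbsMoment

variable {ν : Measure ℝ}

theorem measureReal_uIoo_le {M : ℝ} (hM : 0 ≤ M) (hν : ν ≤ ENNReal.ofReal M • volume)
    (p q : ℝ) : ν.real (uIoo p q) ≤ M * |p - q| := by
  have h := Measure.le_iff'.1 hν (uIoo p q)
  rw [Measure.smul_apply, smul_eq_mul, ← Ioo_min_max, Real.volume_Ioo, max_sub_min_eq_abs',
    ← ENNReal.ofReal_mul hM] at h
  exact ENNReal.toReal_le_of_le_ofReal (by positivity) h

variable [IsFiniteMeasure ν]

theorem integrable_sign_sub (x : ℝ) : Integrable (fun α => Real.sign (x - α)) ν := by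
  rw [sign_sub_eq_indicator_sub_indicator]
  exact ((integrable_const 1).indicator measurableSet_Iio).sub
    ((integrable_const 1).indicator measurableSet_Ioi)

theorem integral_sign_sub (x : ℝ) :
    ∫ α, Real.sign (x - α) ∂ν = ν.real (Iio x) - ν.real (Ioi x) := by
  rw [sign_sub_eq_indicator_sub_indicator, integral_sub', integral_indicator_one measurableSet_Iio,
    integral_indicator_one measurableSet_Ioi]
  · exact (integrable_const 1).indicator measurableSet_Iio
  · exact (integrable_const 1).indicator measurableSet_Ioi

theorem abs_integral_abs_sub_sub_le (hint : ∀ t, Integrable (fun α => |t - α|) ν) (x y : ℝ) :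
    |∫ α, |y - α| ∂ν - ∫ α, |x - α| ∂ν - (y - x) * (ν.real (Iio x) - ν.real (Ioi x))|
      ≤ 2 * |y - x| * ν.real (uIcc x y) := by
  have hdiff : Integrable (fun α => |y - α| - |x - α|) ν := (hint y).sub (hint x)
  rw [← integral_sign_sub, ← integral_const_mul, ← integral_sub (hint y) (hint x),
    ← integral_sub hdiff ((integrable_sign_sub x).const_mul _), ← Real.norm_eq_abs]
  calc _ ≤ ∫ α, (uIcc x y).indicator (fun _ => 2 * |y - x|) α ∂ν :=
        norm_integral_le_of_norm_le ((integrable_const _).indicator measurableSet_uIcc)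
          (ae_of_all _ (abs_sub_abs_sub_mul_sign_le x y))
    _ = 2 * |y - x| * ν.real (uIcc x y) := by
        rw [integral_indicator_const _ measurableSet_uIcc, smul_eq_mul, mul_comm]

theorem hasDerivAt_integral_abs_sub [NullSingletonClass ν]
    (hint : ∀ t, Integrable (fun α => |t - α|) ν) (x : ℝ) :
    HasDerivAt (fun t => ∫ α, |t - α| ∂ν) (ν.real (Iio x) - ν.real (Ioi x)) x := by
  have hsmall : Tendsto (fun y => ν.real (Icc (x - |y - x|) (x + |y - x|))) (𝓝 x) (𝓝 0) := by
    have hdist : Tendsto (fun y => |y - x|) (𝓝 x) (𝓝 0) :=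
      (continuous_id.sub continuous_const).abs.tendsto' x 0 (by simp)
    simpa [measureReal_def, Function.comp_def] using
      (ENNReal.tendsto_toReal ENNReal.zero_ne_top).comp ((tendsto_measure_Icc ν x).comp hdist)
  rw [hasDerivAt_iff_isLittleO, isLittleO_iff]
  intro c hc
  filter_upwards [hsmall.eventually (ge_mem_nhds (half_pos hc))] with y hy
  have hsub : uIcc x y ⊆ Icc (x - |y - x|) (x + |y - x|) :=
    uIcc_subset_Icc (by simp) (by constructor <;> linarith [abs_le.1 (le_refl |y - x|)])
  calc _ ≤ 2 * |y - x| * ν.real (uIcc x y) := abs_integral_abs_sub_sub_le hint x y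
    _ ≤ 2 * |y - x| * (c / 2) := by gcongr; exact (measureReal_mono hsub).trans hy
    _ = c * ‖y - x‖ := by rw [Real.norm_eq_abs]; ring

theorem measureReal_Iio_sub_Ioi_sub_of_le [NullSingletonClass ν] {p q : ℝ} (hpq : p ≤ q) :
    (ν.real (Iio q) - ν.real (Ioi q)) - (ν.real (Iio p) - ν.real (Ioi p))
      = 2 * ν.real (Ioo p q) := by
  have hIio : ν.real (Iio q) = ν.real (Iio p) + ν.real (Ioo p q) := by
    rw [← Iio_union_Ico_eq_Iio hpq, measureReal_union (Iio_disjoint_Ici le_rfl |>.mono_right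
      Ico_subset_Ici_self) measurableSet_Ico, measureReal_congr Ioo_ae_eq_Ico.symm]
  have hIoi : ν.real (Ioi p) = ν.real (Ioo p q) + ν.real (Ioi q) := by
    rw [← Ioc_union_Ioi_eq_Ioi hpq, measureReal_union (Iic_disjoint_Ioi le_rfl |>.mono_left
      Ioc_subset_Iic_self) measurableSet_Ioi, measureReal_congr Ioo_ae_eq_Ioc.symm]
  rw [hIio, hIoi]
  ring

theorem abs_measureReal_Iio_sub_Ioi_sub [NullSingletonClass ν] (p q : ℝ) :
    |(ν.real (Iio q) - ν.real (Ioi q)) - (ν.real (Iio p) - ν.real (Ioi p))|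
      = 2 * ν.real (uIoo p q) := by
  rcases le_total p q with hpq | hqp
  · rw [measureReal_Iio_sub_Ioi_sub_of_le hpq, uIoo_of_le hpq, abs_of_nonneg (by positivity)]
  · rw [abs_sub_comm, measureReal_Iio_sub_Ioi_sub_of_le hqp, uIoo_of_ge hqp,
      abs_of_nonneg (by positivity)]

theorem lipschitzWith_measureReal_Iio_sub_Ioi {c : ℝ≥0} (hν : ν ≤ (c : ℝ≥0∞) • volume) :
    LipschitzWith (2 * c) fun x => ν.real (Iio x) - ν.real (Ioi x) := by
  have : NullSingletonClass ν := NullSingletonClass.of_le_smul hν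
  refine LipschitzWith.of_dist_le_mul fun q p => ?_
  rw [Real.dist_eq, Real.dist_eq, abs_measureReal_Iio_sub_Ioi_sub, NNReal.coe_mul, NNReal.coe_two,
    mul_assoc]
  gcongr
  rw [abs_sub_comm]
  exact measureReal_uIoo_le c.coe_nonneg (by rwa [ENNReal.ofReal_coe_nnreal]) p q

end AbsMoment

theorem lipschitzWith_fderiv_fst_add_snd {g h g' h' : ℝ → ℝ} (hg : ∀ x, HasDerivAt g (g' x) x)
    (hh : ∀ y, HasDerivAt h (h' y) y) {Lg Lh : ℝ≥0} (hLg : LipschitzWith Lg g')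
    (hLh : LipschitzWith Lh h') :
    LipschitzWith (Lg + Lh) (fderiv ℝ fun z : ℝ × ℝ => g z.1 + h z.2) := by
  set π₁ := ContinuousLinearMap.fst ℝ ℝ ℝ
  set π₂ := ContinuousLinearMap.snd ℝ ℝ ℝ
  have hF : ∀ z : ℝ × ℝ,
      fderiv ℝ (fun z : ℝ × ℝ => g z.1 + h z.2) z = g' z.1 • π₁ + h' z.2 • π₂ := by
    intro z
    refine (((hg z.1).hasFDerivAt.comp z hasFDerivAt_fst).add
      ((hh z.2).hasFDerivAt.comp z hasFDerivAt_snd)).fderiv.trans ?_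
    ext <;> simp [π₁, π₂]
  refine LipschitzWith.of_dist_le_mul fun p q => ?_
  have hπ₁ : ‖π₁‖ ≤ 1 := ContinuousLinearMap.norm_fst_le ℝ ℝ ℝ
  have hπ₂ : ‖π₂‖ ≤ 1 := ContinuousLinearMap.norm_snd_le ℝ ℝ ℝ
  calc dist (fderiv ℝ (fun z : ℝ × ℝ => g z.1 + h z.2) p) (fderiv ℝ _ q)
      = ‖(g' p.1 - g' q.1) • π₁ + (h' p.2 - h' q.2) • π₂‖ := by
        rw [dist_eq_norm, hF, hF]; congr 1; module
    _ ≤ ‖(g' p.1 - g' q.1) • π₁‖ + ‖(h' p.2 - h' q.2) • π₂‖ := norm_add_le _ _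
    _ = dist (g' p.1) (g' q.1) * ‖π₁‖ + dist (h' p.2) (h' q.2) * ‖π₂‖ := by
        rw [norm_smul, norm_smul, ← dist_eq_norm, ← dist_eq_norm]
    _ ≤ Lg * dist p.1 q.1 * 1 + Lh * dist p.2 q.2 * 1 := by
        gcongr
        exacts [hLg.dist_le_mul _ _, hLh.dist_le_mul _ _]
    _ ≤ (Lg + Lh : ℝ≥0) * dist p q := by
        rw [mul_one, mul_one, NNReal.coe_add, add_mul, Prod.dist_eq]
        gcongr
        exacts [le_max_left _ _, le_max_right _ _]

theorem ENNReal.le_ofReal_iSup_toReal {ι : Sort*} {a : ι → ℝ≥0∞} {B : ℝ≥0∞} (hB : B ≠ ∞)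
    (ha : ∀ i, a i ≤ B) (i : ι) : a i ≤ ENNReal.ofReal (⨆ j, (a j).toReal) := by
  rw [← ENNReal.toReal_iSup fun j => ne_top_of_le_ne_top hB (ha j),
    ENNReal.ofReal_toReal (ne_top_of_le_ne_top hB (iSup_le ha))]
  exact le_iSup a i

theorem measure_preimage_mk_le_ofReal_iSup {X Y : Type*} [TopologicalSpace X]
    [TopologicalSpace Y] [MeasurableSpace Y] {μ : Measure Y} [IsFiniteMeasureOnCompacts μ]
    {K : Set (X × Y)} (hK : IsCompact K) (x : X) :
    μ (Prod.mk x ⁻¹' K) ≤ ENNReal.ofReal (⨆ s, (μ (Prod.mk s ⁻¹' K)).toReal) :=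
  ENNReal.le_ofReal_iSup_toReal (hK.image (f := Prod.snd) continuous_snd).measure_ne_top
    (fun s => measure_mono fun y hy => ⟨(s, y), hy, rfl⟩) x

theorem measure_preimage_mk_left_le_ofReal_iSup {X Y : Type*} [TopologicalSpace X]
    [TopologicalSpace Y] [MeasurableSpace X] {μ : Measure X} [IsFiniteMeasureOnCompacts μ]
    {K : Set (X × Y)} (hK : IsCompact K) (y : Y) :
    μ ((·, y) ⁻¹' K) ≤ ENNReal.ofReal (⨆ s, (μ ((·, s) ⁻¹' K)).toReal) :=
  ENNReal.le_ofReal_iSup_toReal (hK.image (f := Prod.fst) continuous_fst).measure_ne_top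
    (fun s => measure_mono fun x hx => ⟨(x, s), hx, rfl⟩) y

section Marginal

variable {X Y : Type*} [MeasurableSpace X] [MeasurableSpace Y] {μ₁ : Measure X}
  {μ₂ : Measure Y} {K : Set (X × Y)}

theorem map_fst_restrict_prod_le [SFinite μ₂] (hK : MeasurableSet K) {m : ℝ≥0∞}
    (hm : ∀ x, μ₂ (Prod.mk x ⁻¹' K) ≤ m) : ((μ₁.prod μ₂).restrict K).map Prod.fst ≤ m • μ₁ := by
  refine Measure.le_iff.2 fun S hS => ?_
  rw [Measure.map_apply measurable_fst hS, Measure.restrict_apply (measurable_fst hS),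
    Measure.prod_apply ((measurable_fst hS).inter hK), Measure.smul_apply, smul_eq_mul,
    ← lintegral_indicator_const hS]
  refine lintegral_mono fun x => ?_
  by_cases hx : x ∈ S
  · rw [indicator_of_mem hx]
    exact (measure_mono fun y hy => hy.2).trans (hm x)
  · rw [indicator_of_notMem hx]
    exact (measure_mono_null (fun y hy => (hx hy.1).elim) measure_empty).le

theorem map_snd_restrict_prod_le [SFinite μ₁] [SFinite μ₂] (hK : MeasurableSet K) {m : ℝ≥0∞}
    (hm : ∀ y, μ₁ ((·, y) ⁻¹' K) ≤ m) : ((μ₁.prod μ₂).restrict K).map Prod.snd ≤ m • μ₂ := by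
  have hswap : ((μ₁.prod μ₂).restrict K).map Prod.snd
      = ((μ₂.prod μ₁).restrict (Prod.swap ⁻¹' K)).map Prod.fst := by
    rw [← Measure.prod_swap, Measure.restrict_map measurable_swap hK,
      Measure.map_map measurable_snd measurable_swap]
    rfl
  rw [hswap]
  exact map_fst_restrict_prod_le (measurable_swap hK) hm

end Marginal

theorem withDensity_le_smul_of_le {X : Type*} [MeasurableSpace X] {μ : Measure X}
    {f : X → ℝ≥0∞} {c : ℝ≥0∞} (hf : ∀ x, f x ≤ c) : μ.withDensity f ≤ c • μ :=
  (withDensity_mono (ae_of_all _ hf)).trans_eq (withDensity_const c)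

section BoundedDensity

variable {μ₁ μ₂ : Measure ℝ} {K : Set (ℝ × ℝ)} {C : ℝ}

theorem map_fst_restrict_prod_le_smul_volume [SFinite μ₂] [IsFiniteMeasureOnCompacts μ₂]
    (hK : IsCompact K) (hμ₁ : μ₁ ≤ ENNReal.ofReal C • volume) :
    ((μ₁.prod μ₂).restrict K).map Prod.fst
      ≤ ENNReal.ofReal (C * ⨆ x, (μ₂ (Prod.mk x ⁻¹' K)).toReal) • volume := by
  calc _ ≤ ENNReal.ofReal (⨆ x, (μ₂ (Prod.mk x ⁻¹' K)).toReal) • μ₁ :=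
        map_fst_restrict_prod_le hK.isClosed.measurableSet (measure_preimage_mk_le_ofReal_iSup hK)
    _ ≤ _ := by
        rw [ENNReal.ofReal_mul' (Real.iSup_nonneg fun _ => ENNReal.toReal_nonneg), mul_comm,
          ← smul_smul]
        gcongr

theorem map_snd_restrict_prod_le_smul_volume [SFinite μ₁] [SFinite μ₂]
    [IsFiniteMeasureOnCompacts μ₁] (hK : IsCompact K) (hμ₂ : μ₂ ≤ ENNReal.ofReal C • volume) :
    ((μ₁.prod μ₂).restrict K).map Prod.snd
      ≤ ENNReal.ofReal (C * ⨆ y, (μ₁ ((·, y) ⁻¹' K)).toReal) • volume := by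
  calc _ ≤ ENNReal.ofReal (⨆ y, (μ₁ ((·, y) ⁻¹' K)).toReal) • μ₂ :=
        map_snd_restrict_prod_le hK.isClosed.measurableSet
          (measure_preimage_mk_left_le_ofReal_iSup hK)
    _ ≤ _ := by
        rw [ENNReal.ofReal_mul' (Real.iSup_nonneg fun _ => ENNReal.toReal_nonneg), mul_comm,
          ← smul_smul]
        gcongr

end BoundedDensity

section CompactSupport

variable {X : Type*} [TopologicalSpace X] [MeasurableSpace X] [OpensMeasurableSpace X] [T2Space X]
  {ν : Measure X} [IsFiniteMeasureOnCompacts ν] {K : Set X}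

theorem IsCompact.hasDerivAt_integral_abs_sub_map_restrict (hK : IsCompact K) {φ : X → ℝ}
    (hφ : Continuous φ) [NullSingletonClass ((ν.restrict K).map φ)] (x : ℝ) :
    HasDerivAt (fun t => ∫ α, |t - α| ∂((ν.restrict K).map φ))
      (((ν.restrict K).map φ).real (Iio x) - ((ν.restrict K).map φ).real (Ioi x)) x := by
  have : IsFiniteMeasure (ν.restrict K) := isFiniteMeasure_restrict.2 hK.measure_ne_top
  refine hasDerivAt_integral_abs_sub (fun t => ?_) x
  exact (integrable_map_measure (by fun_prop) hφ.aemeasurable).2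
    ((by fun_prop : Continuous fun z => |t - φ z|).continuousOn.integrableOn_compact hK)

end CompactSupport

section L1Potential

variable {ν : Measure (ℝ × ℝ)} [IsFiniteMeasureOnCompacts ν] {K : Set (ℝ × ℝ)} {F : ℝ × ℝ → ℝ}

theorem eq_integral_map_restrict_fst_add_snd (hK : IsCompact K)
    (hF : ∀ z, F z = ∫ p in K, (|z.1 - p.1| + |z.2 - p.2|) ∂ν) :
    F = fun z => ∫ α, |z.1 - α| ∂((ν.restrict K).map Prod.fst)
      + ∫ β, |z.2 - β| ∂((ν.restrict K).map Prod.snd) := by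
  have hint : ∀ f : ℝ × ℝ → ℝ, Continuous f → Integrable f (ν.restrict K) :=
    fun f hf => hf.continuousOn.integrableOn_compact hK
  ext z
  rw [hF, integral_map measurable_fst.aemeasurable (by fun_prop),
    integral_map measurable_snd.aemeasurable (by fun_prop)]
  exact integral_add (hint _ (by fun_prop)) (hint _ (by fun_prop))

theorem deriv_partial_fst_eq_measureReal_Iio_sub_Ioi (hK : IsCompact K)
    (hF : ∀ z, F z = ∫ p in K, (|z.1 - p.1| + |z.2 - p.2|) ∂ν)
    [NullSingletonClass ((ν.restrict K).map Prod.fst)] (x y : ℝ) :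
    deriv (fun t => F (t, y)) x =
      ((ν.restrict K).map Prod.fst).real (Iio x) - ((ν.restrict K).map Prod.fst).real (Ioi x) := by
  rw [eq_integral_map_restrict_fst_add_snd hK hF]
  exact ((hK.hasDerivAt_integral_abs_sub_map_restrict (ν := ν) continuous_fst x).add_const
    (∫ β, |y - β| ∂((ν.restrict K).map Prod.snd))).deriv

theorem lipschitzWith_fderiv_of_map_restrict_le (hK : IsCompact K)
    (hF : ∀ z, F z = ∫ p in K, (|z.1 - p.1| + |z.2 - p.2|) ∂ν) {c₁ c₂ : ℝ≥0}
    (h₁ : (ν.restrict K).map Prod.fst ≤ (c₁ : ℝ≥0∞) • volume)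
    (h₂ : (ν.restrict K).map Prod.snd ≤ (c₂ : ℝ≥0∞) • volume) :
    LipschitzWith (2 * c₁ + 2 * c₂) (fderiv ℝ F) := by
  have : IsFiniteMeasure (ν.restrict K) := isFiniteMeasure_restrict.2 hK.measure_ne_top
  have := NullSingletonClass.of_le_smul h₁
  have := NullSingletonClass.of_le_smul h₂
  rw [eq_integral_map_restrict_fst_add_snd hK hF]
  exact lipschitzWith_fderiv_fst_add_snd
    (hK.hasDerivAt_integral_abs_sub_map_restrict continuous_fst)
    (hK.hasDerivAt_integral_abs_sub_map_restrict continuous_snd)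
    (lipschitzWith_measureReal_Iio_sub_Ioi h₁) (lipschitzWith_measureReal_Iio_sub_Ioi h₂)

end L1Potential

theorem stmt17_general (K : Set (ℝ × ℝ)) (hKc : IsCompact K)
    (f₁ f₂ : ℝ → ℝ≥0∞)
    (C₁ C₂ : ℝ) (hC₁ : 0 < C₁)
    (hf₁b : ∀ s, f₁ s ≤ ENNReal.ofReal C₁) (hf₂b : ∀ s, f₂ s ≤ ENNReal.ofReal C₂)
    (μ₁ μ₂ : Measure ℝ) (hμ₁ : μ₁ = volume.withDensity f₁)
    (hμ₂ : μ₂ = volume.withDensity f₂)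
    (μ : Measure (ℝ × ℝ)) (hμ : μ = μ₁.prod μ₂)
    (F : ℝ × ℝ → ℝ)
    (hF : ∀ z : ℝ × ℝ, F z = ∫ p in K, (|z.1 - p.1| + |z.2 - p.2|) ∂μ) :
    (∃ L : ℝ, 0 ≤ L ∧ ∀ p q : ℝ × ℝ,
        ‖fderiv ℝ F p - fderiv ℝ F q‖ ≤ L * ‖p - q‖) ∧
    (∀ p q : ℝ × ℝ,
      |deriv (fun t => F (t, q.2)) q.1 - deriv (fun t => F (t, p.2)) p.1|
        = 2 * (μ {z ∈ K | min p.1 q.1 < z.1 ∧ z.1 < max p.1 q.1}).toReal ∧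
      |deriv (fun t => F (t, q.2)) q.1 - deriv (fun t => F (t, p.2)) p.1|
        ≤ 2 * C₁ * (⨆ s : ℝ, (μ₂ {y : ℝ | (s, y) ∈ K}).toReal) * |p.1 - q.1|) := by
  subst hμ
  have hμ₁C : μ₁ ≤ ENNReal.ofReal C₁ • volume := hμ₁ ▸ withDensity_le_smul_of_le hf₁b
  have hμ₂C : μ₂ ≤ ENNReal.ofReal C₂ • volume := hμ₂ ▸ withDensity_le_smul_of_le hf₂b
  have : IsLocallyFiniteMeasure μ₁ :=
    Measure.isLocallyFiniteMeasure_of_le (μ := C₁.toNNReal • volume) hμ₁C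
  have : IsLocallyFiniteMeasure μ₂ :=
    Measure.isLocallyFiniteMeasure_of_le (μ := C₂.toNNReal • volume) hμ₂C
  have hν₁ := map_fst_restrict_prod_le_smul_volume (μ₂ := μ₂) hKc hμ₁C
  have hν₂ := map_snd_restrict_prod_le_smul_volume (μ₁ := μ₁) hKc hμ₂C
  have := NullSingletonClass.of_le_smul hν₁
  have : IsFiniteMeasure ((μ₁.prod μ₂).restrict K) := isFiniteMeasure_restrict.2 hKc.measure_ne_top
  obtain ⟨L, hLip⟩ : ∃ L, LipschitzWith L (fderiv ℝ F) :=
    ⟨_, lipschitzWith_fderiv_of_map_restrict_le hKc hF hν₁ hν₂⟩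
  refine ⟨⟨L, L.coe_nonneg, fun p q => ?_⟩, fun p q => ?_⟩
  · simpa only [dist_eq_norm] using hLip.dist_le_mul p q
  rw [deriv_partial_fst_eq_measureReal_Iio_sub_Ioi hKc hF,
    deriv_partial_fst_eq_measureReal_Iio_sub_Ioi hKc hF, abs_measureReal_Iio_sub_Ioi_sub]
  refine ⟨?_, ?_⟩
  · rw [measureReal_def, ← Ioo_min_max, Measure.map_apply measurable_fst measurableSet_Ioo,
      Measure.restrict_apply (measurable_fst measurableSet_Ioo), inter_comm]
    rfl
  · have hY := measureReal_uIoo_le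
      (mul_nonneg hC₁.le (Real.iSup_nonneg fun _ => ENNReal.toReal_nonneg)) hν₁ p.1 q.1
    rw [mul_assoc 2 C₁, mul_assoc]
    exact mul_le_mul_of_nonneg_left hY two_pos.le

theorem stmt17 (K : Set (ℝ × ℝ)) (hKne : K.Nonempty) (hKc : IsCompact K)
    (hKcl : K = closure (interior K))
    (f₁ f₂ : ℝ → ℝ≥0∞) (hf₁ : Measurable f₁) (hf₂ : Measurable f₂)
    (C₁ C₂ : ℝ) (hC₁ : 0 < C₁) (hC₂ : 0 < C₂)
    (hf₁b : ∀ s, f₁ s ≤ ENNReal.ofReal C₁) (hf₂b : ∀ s, f₂ s ≤ ENNReal.ofReal C₂)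
    (μ₁ μ₂ : Measure ℝ) (hμ₁ : μ₁ = volume.withDensity f₁)
    (hμ₂ : μ₂ = volume.withDensity f₂)
    (μ : Measure (ℝ × ℝ)) (hμ : μ = μ₁.prod μ₂)
    (hsupp : μ Kᶜ = 0)
    (hC3 : ∀ x : ℝ, μ {p ∈ K | p.1 = x} = 0 ∧ μ {p ∈ K | p.2 = x} = 0)
    (F : ℝ × ℝ → ℝ)
    (hF : ∀ z : ℝ × ℝ, F z = ∫ p in K, (|z.1 - p.1| + |z.2 - p.2|) ∂μ) :
    (∃ L : ℝ, 0 ≤ L ∧ ∀ p q : ℝ × ℝ,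
        ‖fderiv ℝ F p - fderiv ℝ F q‖ ≤ L * ‖p - q‖) ∧
    (∀ p q : ℝ × ℝ,
      |deriv (fun t => F (t, q.2)) q.1 - deriv (fun t => F (t, p.2)) p.1|
        = 2 * (μ {z ∈ K | min p.1 q.1 < z.1 ∧ z.1 < max p.1 q.1}).toReal ∧
      |deriv (fun t => F (t, q.2)) q.1 - deriv (fun t => F (t, p.2)) p.1|
        ≤ 2 * C₁ * (⨆ s : ℝ, (μ₂ {y : ℝ | (s, y) ∈ K}).toReal) * |p.1 - q.1|) :=
  stmt17_general K hKc f₁ f₂ C₁ C₂ hC₁ hf₁b hf₂b μ₁ μ₂ hμ₁ hμ₂ μ hμ F hF
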